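/- arXiv:0810.2289 — 3 statements merged into one kernel-verified Lean document; each statement's English description precedes it below -/
import Mathlib

section
/- Let Y be a downward run chain on a poset (S, ≼), and define G(x) = Pr_e(U_x ≤ U_e) where U_x is the first positive hitting time of x. Then G is left-invariant for the transition kernel Q: for all y ∈ S, Σ_x G(x) Q(x,y) = G(y). -/
open scoped ENNReal

noncomputable section
open scoped Classical

/-- The probability of following the word `l` of successive states, starting at `x`,
under the transition kernel `P`. -/
def wordProb {S : Type*} (P : S → S → ℝ≥0∞) : S → List S → ℝ≥0∞
  | _, [] => 1
  | x, y :: l => P x y * wordProb P y l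

/-- `hitProb P e x = Pr_e(T_x ≤ T_e)`: the probability, starting at `e`, that the chain
reaches `x` (at a positive time) before returning to `e`; by convention it is `1` at `e`. -/
def hitProb {S : Type*} (P : S → S → ℝ≥0∞) (e x : S) : ℝ≥0∞ :=
  if x = e then 1
  else ∑' l : {l : List S // x ∉ l ∧ e ∉ l}, wordProb P e (l.1 ++ [x])

/-- `survival P e n = Pr_e(T_e > n)`: the chain avoids `e` during the first `n` steps. -/
def survival {S : Type*} (P : S → S → ℝ≥0∞) (e : S) (n : ℕ) : ℝ≥0∞ :=
  ∑' l : {l : List S // l.length = n ∧ e ∉ l}, wordProb P e l.1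

/-- `returnAt P e n = Pr_e(T_e = n + 1)`: first return to `e` at time `n+1`. -/
def returnAt {S : Type*} (P : S → S → ℝ≥0∞) (e : S) (n : ℕ) : ℝ≥0∞ :=
  ∑' l : {l : List S // l.length = n ∧ e ∉ l}, wordProb P e (l.1 ++ [e])

/-- The chain is recurrent (at `e`) if it returns to `e` with probability one. -/
def Recurrent {S : Type*} (P : S → S → ℝ≥0∞) (e : S) : Prop :=
  ∑' n : ℕ, returnAt P e n = 1

/-- The chain is positive recurrent at `e` if it is recurrent and the expected return
time `E_e(T_e) = ∑_n Pr_e(T_e > n)` is finite. -/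
def PositiveRecurrent {S : Type*} (P : S → S → ℝ≥0∞) (e : S) : Prop :=
  Recurrent P e ∧ ∑' n : ℕ, survival P e n < ⊤

/-- `n`-step transition probabilities. -/
def stepN {S : Type*} (P : S → S → ℝ≥0∞) : ℕ → S → S → ℝ≥0∞
  | 0, x, y => if x = y then 1 else 0
  | n + 1, x, y => ∑' z : S, P x z * stepN P n z y

variable {S : Type*} [PartialOrder S] [OrderBot S]

/-- An upward run kernel: `P(x,y) > 0` iff `y` covers `x` or `y = e`. -/
def IsUpwardRunKernel (P : S → S → ℝ≥0∞) : Prop :=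
  (∀ x : S, ∑' y : S, P x y = 1) ∧ ∀ x y : S, 0 < P x y ↔ (x ⋖ y ∨ y = ⊥)

/-- A downward run kernel: `Q(e,y) > 0` for all `y`, and for `x ≠ e`,
`Q(x,y) > 0` iff `x` covers `y`. -/
def IsDownwardRunKernel (Q : S → S → ℝ≥0∞) : Prop :=
  (∀ x : S, ∑' y : S, Q x y = 1) ∧ (∀ y : S, 0 < Q ⊥ y) ∧
    ∀ x : S, x ≠ ⊥ → ∀ y : S, (0 < Q x y ↔ y ⋖ x)

/-- Every chain from `⊥` to `x` is finite. -/
def BoundedChainsFinite (S : Type*) [PartialOrder S] [OrderBot S] : Prop :=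
  ∀ x : S, ∀ C : Set S, C ⊆ Set.Iic x → IsChain (· ≤ ·) C → C.Finite

/-- `l` is a covering path from `⊥` ending at `x` (the path is `⊥ :: l`). -/
def IsPathTo (l : List S) (x : S) : Prop :=
  List.Chain (· ⋖ ·) ⊥ l ∧ (⊥ :: l).getLast (List.cons_ne_nil _ _) = x

/-- `x` is at level `n`: some covering path from `⊥` to `x` has length `n`. -/
def InLevel (x : S) (n : ℕ) : Prop :=
  ∃ l : List S, IsPathTo l x ∧ l.length = n



section Aux

open Classical

variable {S : Type*}

lemma DRG.wordProb_cons (P : S → S → ℝ≥0∞) (x y : S) (l : List S) :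
    wordProb P x (y :: l) = P x y * wordProb P y l := rfl

lemma DRG.wordProb_nil (P : S → S → ℝ≥0∞) (x : S) : wordProb P x [] = 1 := rfl

lemma DRG.wordProb_snoc (P : S → S → ℝ≥0∞) :
    ∀ (l : List S) (x y : S),
      wordProb P x (l ++ [y]) = wordProb P x l * P (l.getLastD x) y
  | [], x, y => by simp [DRG.wordProb_cons, DRG.wordProb_nil, List.getLastD_nil]
  | a :: l, x, y => by
      rw [List.cons_append, DRG.wordProb_cons, DRG.wordProb_snoc P l a y,
        List.getLastD_cons, DRG.wordProb_cons, mul_assoc]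

/-- cons as an equivalence. -/
def DRG.consEquiv (S : Type*) : Option (S × List S) ≃ List S where
  toFun o := match o with | none => [] | some p => p.1 :: p.2
  invFun l := match l with | [] => none | a :: t => some (a, t)
  left_inv o := by rcases o with _ | ⟨a, t⟩ <;> rfl
  right_inv l := by cases l <;> rfl

@[simp] lemma DRG.consEquiv_none : DRG.consEquiv S none = [] := rfl
@[simp] lemma DRG.consEquiv_some (p : S × List S) :
    DRG.consEquiv S (some p) = p.1 :: p.2 := rfl

/-- reverse as an equivalence. -/
def DRG.revEquiv (S : Type*) : List S ≃ List S where
  toFun := List.reverse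
  invFun := List.reverse
  left_inv := List.reverse_reverse
  right_inv := List.reverse_reverse

/-- snoc as an equivalence. -/
def DRG.snocEquiv (S : Type*) : Option (S × List S) ≃ List S :=
  (Equiv.optionCongr ((Equiv.refl S).prodCongr (DRG.revEquiv S))).trans
    ((DRG.consEquiv S).trans (DRG.revEquiv S))

@[simp] lemma DRG.snocEquiv_none : DRG.snocEquiv S none = [] := rfl
@[simp] lemma DRG.snocEquiv_some (p : S × List S) :
    DRG.snocEquiv S (some p) = p.2 ++ [p.1] := by
  simp [DRG.snocEquiv, DRG.revEquiv, DRG.consEquiv, Equiv.optionCongr, Equiv.prodCongr]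

lemma DRG.tsum_option (f : Option S → ℝ≥0∞) :
    ∑' o : Option S, f o = f none + ∑' b : S, f (some b) := by
  rw [ENNReal.tsum_eq_add_tsum_ite none]
  congr 1
  have h1 : (∑' x : Option S, @ite ℝ≥0∞ (x = none) (Classical.propDecidable _) 0 (f x))
      = ∑' x : Option S, x.elim 0 (fun b => f (some b)) :=
    tsum_congr fun x => match x with
      | none => if_pos rfl
      | some b => if_neg (by simp)
  have hsupp : Function.support (fun o : Option S => o.elim 0 (fun b => f (some b)))
      ⊆ Set.range (some : S → Option S) := by
    intro o ho
    rcases o with _ | b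
    · exact absurd rfl ho
    · exact ⟨b, rfl⟩
  have h2 : (∑' c : S, (some c : Option S).elim 0 (fun b => f (some b)))
      = ∑' x : Option S, x.elim 0 (fun b => f (some b)) :=
    (Option.some_injective S).tsum_eq hsupp
  exact h1.trans (h2.symm.trans (tsum_congr fun b => rfl))

lemma DRG.tsum_subtype_if (p : S → Prop) (f : S → ℝ≥0∞) :
    ∑' b : {b // p b}, f b.1 = ∑' b : S, if p b then f b else 0 := by
  refine (tsum_subtype {b | p b} f).trans ?_
  exact tsum_congr fun b => by by_cases h : p b <;> simp [Set.indicator, h]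

lemma DRG.wf_lt [PartialOrder S] [OrderBot S] (hfin : BoundedChainsFinite S) :
    WellFounded ((· < ·) : S → S → Prop) := by
  rw [RelEmbedding.wellFounded_iff_isEmpty]
  constructor
  intro f
  have hanti : ∀ {m n : ℕ}, n < m → f m < f n := fun {m n} h => f.map_rel_iff.mpr h
  have hle : ∀ n, f n ≤ f 0 := by
    intro n
    rcases Nat.eq_zero_or_pos n with h | h
    · simp [h]
    · exact (hanti h).le
  have hchain : IsChain (· ≤ ·) (Set.range f) := by
    rintro a ⟨m, rfl⟩ b ⟨n, rfl⟩ hne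
    rcases lt_trichotomy m n with h | h | h
    · exact Or.inr (hanti h).le
    · exact absurd (congrArg f h) hne
    · exact Or.inl (hanti h).le
  have hsub : Set.range f ⊆ Set.Iic (f 0) := by
    rintro a ⟨n, rfl⟩; exact hle n
  have hfinite := hfin (f 0) (Set.range f) hsub hchain
  exact (Set.infinite_range_of_injective f.injective) hfinite

section Kernel

variable [PartialOrder S] [OrderBot S]
variable {Q : S → S → ℝ≥0∞}

lemma DRG.chain_of_ne_zero (Q : S → S → ℝ≥0∞) :
    ∀ (l : List S) (x : S), wordProb Q x l ≠ 0 →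
      List.Chain (fun a b => Q a b ≠ 0) x l
  | [], x, _ => List.Chain.nil
  | y :: l, x, h => by
      rw [DRG.wordProb_cons] at h
      rcases mul_ne_zero_iff.mp h with ⟨h1, h2⟩
      exact List.Chain.cons h1 (DRG.chain_of_ne_zero Q l y h2)

lemma DRG.gt_chain (hQ : IsDownwardRunKernel Q) :
    ∀ (l : List S) (a : S), a ≠ ⊥ → (∀ b ∈ l, b ≠ ⊥) →
      List.Chain (fun u v => Q u v ≠ 0) a l → List.Chain (· > ·) a l
  | [], a, _, _, _ => List.Chain.nil
  | b :: l, a, ha, hall, h => by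
      rw [List.Chain, List.chain_cons] at h ⊢
      have hcov : b ⋖ a := (hQ.2.2 a ha b).mp (pos_iff_ne_zero.mpr h.1)
      exact ⟨hcov.lt, DRG.gt_chain hQ l b (hall b List.mem_cons_self)
        (fun c hc => hall c (List.mem_cons_of_mem b hc)) h.2⟩

lemma DRG.wordProb_zero_of_mem (hQ : IsDownwardRunKernel Q)
    {l : List S} {y : S} (hy : y ≠ ⊥) (hl : ⊥ ∉ l) (hmem : y ∈ l) :
    wordProb Q ⊥ (l ++ [y]) = 0 := by
  by_contra h
  have hch := DRG.chain_of_ne_zero Q (l ++ [y]) ⊥ h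
  cases l with
  | nil => simp at hmem
  | cons a t =>
    rw [List.cons_append, List.Chain, List.chain_cons] at hch
    have ha : a ≠ ⊥ := fun hh => hl (hh ▸ List.mem_cons_self)
    have hall : ∀ b ∈ t ++ [y], b ≠ ⊥ := by
      intro b hb
      rcases List.mem_append.mp hb with hb | hb
      · exact fun hh => hl (hh ▸ List.mem_cons_of_mem a hb)
      · rw [List.mem_singleton.mp hb]; exact hy
    have hgt := DRG.gt_chain hQ (t ++ [y]) a ha hall hch.2
    have hp : List.Pairwise (· > ·) (a :: (t ++ [y])) :=
      List.isChain_iff_pairwise.mp hgt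
    have hnd : (a :: (t ++ [y])).Nodup := hp.imp (fun h => ne_of_gt h)
    rw [show a :: (t ++ [y]) = (a :: t) ++ [y] from rfl, List.nodup_append] at hnd
    exact hnd.2.2 y hmem y (List.mem_singleton_self y) rfl

/-- Sum over ⊥-avoiding paths from ⊥, ending with a final step to `y`. -/
def DRG.Dfun (Q : S → S → ℝ≥0∞) (y : S) : ℝ≥0∞ :=
  ∑' l : {l : List S // ⊥ ∉ l}, wordProb Q ⊥ (l.1 ++ [y])

/-- Probability of eventually stepping to ⊥ starting from `x` (⊥-avoiding before). -/
def DRG.Afun (Q : S → S → ℝ≥0∞) (x : S) : ℝ≥0∞ :=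
  ∑' l : {l : List S // ⊥ ∉ l}, wordProb Q x (l.1 ++ [⊥])

lemma DRG.Afun_rec (Q : S → S → ℝ≥0∞) (x : S) :
    DRG.Afun Q x = Q x ⊥ + ∑' y : S, (if y = ⊥ then 0 else Q x y * DRG.Afun Q y) := by
  rw [DRG.Afun, DRG.tsum_subtype_if (fun l => ⊥ ∉ l) (fun l => wordProb Q x (l ++ [⊥])),
    ← (DRG.consEquiv S).tsum_eq, DRG.tsum_option]
  congr 1
  · simp [DRG.wordProb_cons, DRG.wordProb_nil]
  · rw [ENNReal.tsum_prod']
    refine tsum_congr fun y => ?_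
    by_cases hy : y = ⊥
    · simp [hy]
    · simp only [hy, if_false, DRG.consEquiv_some]
      rw [DRG.Afun, DRG.tsum_subtype_if (fun l => ⊥ ∉ l)
        (fun l => wordProb Q y (l ++ [⊥])), ← ENNReal.tsum_mul_left]
      refine tsum_congr fun l => ?_
      by_cases hl : ⊥ ∈ l <;>
        simp [DRG.wordProb_cons, hl, (Ne.symm hy : (⊥ : S) ≠ y)]

lemma DRG.Afun_one (hfin : BoundedChainsFinite S) (hQ : IsDownwardRunKernel Q) :
    ∀ x : S, x ≠ ⊥ → DRG.Afun Q x = 1 := by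
  have wf := DRG.wf_lt hfin
  intro x
  refine WellFounded.induction wf (C := fun x => x ≠ ⊥ → DRG.Afun Q x = 1) x ?_
  intro x IH hx
  rw [DRG.Afun_rec]
  have h1 : ∀ y : S, (if y = ⊥ then 0 else Q x y * DRG.Afun Q y)
      = (if y = ⊥ then 0 else Q x y) := by
    intro y
    by_cases hy : y = ⊥
    · simp [hy]
    · simp only [hy, if_false]
      rcases eq_or_ne (Q x y) 0 with h | h
      · simp [h]
      · have hc : y ⋖ x := (hQ.2.2 x hx y).mp (pos_iff_ne_zero.mpr h)
        rw [IH y hc.lt hy, mul_one]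
  rw [tsum_congr h1, ← ENNReal.tsum_eq_add_tsum_ite ⊥]
  exact hQ.1 x

lemma DRG.Dfun_rec (Q : S → S → ℝ≥0∞) (y : S) :
    DRG.Dfun Q y = Q ⊥ y + ∑' x : S, (if x = ⊥ then 0 else DRG.Dfun Q x * Q x y) := by
  rw [DRG.Dfun, DRG.tsum_subtype_if (fun l => ⊥ ∉ l) (fun l => wordProb Q ⊥ (l ++ [y])),
    ← (DRG.snocEquiv S).tsum_eq, DRG.tsum_option]
  congr 1
  · simp [DRG.wordProb_cons, DRG.wordProb_nil]
  · rw [ENNReal.tsum_prod']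
    refine tsum_congr fun x => ?_
    by_cases hx : x = ⊥
    · simp [hx]
    · simp only [if_neg hx, DRG.snocEquiv_some]
      rw [DRG.Dfun, DRG.tsum_subtype_if (fun l => ⊥ ∉ l)
        (fun l => wordProb Q ⊥ (l ++ [x])), ← ENNReal.tsum_mul_right]
      refine tsum_congr fun l => ?_
      by_cases hl : ⊥ ∈ l
      · simp [hl]
      · have hmem : ⊥ ∉ l ++ [x] := by
          simp only [List.mem_append, List.mem_singleton]
          rintro (h | h)
          · exact hl h
          · exact hx h.symm
        rw [if_pos hmem, if_pos hl, DRG.wordProb_snoc Q (l ++ [x]) ⊥ y]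
        congr 2
        rw [List.getLastD_eq_getLast?, List.getLast?_concat, Option.getD_some]

lemma DRG.hitProb_eq_Dfun (hQ : IsDownwardRunKernel Q) {x : S} (hx : x ≠ ⊥) :
    hitProb Q ⊥ x = DRG.Dfun Q x := by
  rw [hitProb, if_neg hx, DRG.Dfun,
    DRG.tsum_subtype_if (fun l => x ∉ l ∧ ⊥ ∉ l) (fun l => wordProb Q ⊥ (l ++ [x])),
    DRG.tsum_subtype_if (fun l => ⊥ ∉ l) (fun l => wordProb Q ⊥ (l ++ [x]))]
  refine tsum_congr fun l => ?_
  by_cases hl : ⊥ ∈ l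
  · simp [hl]
  · by_cases hxl : x ∈ l
    · rw [if_neg (fun h => h.1 hxl), if_pos hl]
      exact (DRG.wordProb_zero_of_mem hQ hx hl hxl).symm
    · rw [if_pos ⟨hxl, hl⟩, if_pos hl]

end Kernel

end Aux

/-- for a downward run chain, `G(x) = Pr_e(U_x ≤ U_e)` is left-invariant
for the kernel `Q`. -/
theorem downward_run_G_left_invariant {S : Type*} [PartialOrder S] [OrderBot S]
    [Countable S] (hfin : BoundedChainsFinite S)
    (Q : S → S → ℝ≥0∞) (hQ : IsDownwardRunKernel Q) :
    ∀ y : S, ∑' x : S, hitProb Q ⊥ x * Q x y = hitProb Q ⊥ y := by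
  intro y
  have h1 : ∑' x : S, hitProb Q ⊥ x * Q x y
      = Q ⊥ y + ∑' x : S, (if x = ⊥ then 0 else DRG.Dfun Q x * Q x y) := by
    rw [ENNReal.tsum_eq_add_tsum_ite ⊥]
    congr 1
    · rw [hitProb, if_pos rfl, one_mul]
    · refine tsum_congr fun x => ?_
      by_cases hx : x = ⊥
      · simp [hx]
      · rw [if_neg hx, if_neg hx, DRG.hitProb_eq_Dfun hQ hx]
  rw [h1, ← DRG.Dfun_rec]
  by_cases hy : y = ⊥
  · subst hy
    rw [hitProb, if_pos rfl]
    have hAD : DRG.Dfun Q (⊥ : S) = DRG.Afun Q (⊥ : S) := rfl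
    rw [hAD, DRG.Afun_rec]
    have h2 : ∀ z : S, (if z = ⊥ then 0 else Q ⊥ z * DRG.Afun Q z)
        = (if z = ⊥ then 0 else Q ⊥ z) := by
      intro z
      by_cases hz : z = ⊥
      · simp [hz]
      · rw [if_neg hz, if_neg hz, DRG.Afun_one hfin hQ z hz, mul_one]
    rw [tsum_congr h2, ← ENNReal.tsum_eq_add_tsum_ite ⊥]
    exact hQ.1 ⊥
  · rw [DRG.hitProb_eq_Dfun hQ hy]


end
end

section
/- Suppose the covering graph of (S, ≼) is a rooted tree with root e, and X is an upward run chain. Then for each n ∈ ℕ, Pr_e(T_e > n) = Σ_{x ∈ S_n} F(x), where S_n = {x : d(e,x) = n} and F is the standard invariant function. Consequently, X is recurrent if and only if Σ_{x ∈ S_n} F(x) → 0 as n → ∞. -/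
open scoped ENNReal

noncomputable section
open scoped Classical

variable {S : Type*} [PartialOrder S] [OrderBot S]

lemma chain_concat_iff {S : Type*} {R : S → S → Prop} (a x : S) (m : List S) :
    List.Chain R a (m ++ [x]) ↔ List.Chain R a m ∧ R ((a :: m).getLast (List.cons_ne_nil _ _)) x := by
  induction m generalizing a with
  | nil => simp [List.Chain]
  | cons b m ih =>
    simp only [List.Chain] at ih ⊢
    rw [List.cons_append, List.chain_cons, List.chain_cons, ih b,
      List.getLast_cons (List.cons_ne_nil _ _), and_assoc]

lemma getLast_cons_concat {S : Type*} (a x : S) (m : List S) :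
    ((a :: (m ++ [x])).getLast (List.cons_ne_nil _ _)) = x := by
  rw [List.getLast_cons (by simp)]
  exact List.getLast_concat

section Helpers
variable {S : Type*} [PartialOrder S] [OrderBot S]

lemma chain_bot_pairwise {l : List S} (h : List.Chain (· ⋖ ·) ⊥ l) :
    List.Pairwise (· < ·) ((⊥ : S) :: l) := by
  have h' : List.Chain (· < ·) ⊥ l := List.Chain.imp (fun a b hab => hab.lt) h
  exact List.isChain_iff_pairwise.mp h'

lemma chain_bot_lt {l : List S} (h : List.Chain (· ⋖ ·) ⊥ l) : ∀ y ∈ l, ⊥ < y :=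
  (List.pairwise_cons.mp (chain_bot_pairwise h)).1

lemma eq_nil_of_last_bot {l : List S} (h : List.Chain (· ⋖ ·) ⊥ l)
    (hl : (((⊥:S) :: l).getLast (List.cons_ne_nil _ _)) = ⊥) : l = [] := by
  rcases List.eq_nil_or_concat l with rfl | ⟨m, x, rfl⟩
  · rfl
  · exfalso
    simp only [List.concat_eq_append] at h hl
    rw [getLast_cons_concat] at hl
    have := chain_bot_lt h x (by simp)
    rw [hl] at this
    exact lt_irrefl _ this

lemma path_unique (htree : ∀ x : S, x ≠ ⊥ → ∃! w : S, w ⋖ x) :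
    ∀ n (l l' : List S), l.length ≤ n → List.Chain (· ⋖ ·) ⊥ l → List.Chain (· ⋖ ·) ⊥ l' →
    (((⊥:S) :: l).getLast (List.cons_ne_nil _ _)) = (((⊥:S) :: l').getLast (List.cons_ne_nil _ _)) →
    l = l' := by
  intro n
  induction n with
  | zero =>
    intro l l' hlen hc hc' hlast
    have hnil : l = [] := List.length_eq_zero_iff.mp (Nat.le_zero.mp hlen)
    subst hnil
    simp only [List.getLast_singleton] at hlast
    exact (eq_nil_of_last_bot hc' hlast.symm).symm
  | succ n ih =>
    intro l l' hlen hc hc' hlast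
    rcases List.eq_nil_or_concat l with rfl | ⟨m, x, rfl⟩
    · simp only [List.getLast_singleton] at hlast
      exact (eq_nil_of_last_bot hc' hlast.symm).symm
    rcases List.eq_nil_or_concat l' with rfl | ⟨m', x', rfl⟩
    · simp only [List.getLast_singleton] at hlast
      exact eq_nil_of_last_bot hc hlast
    simp only [List.concat_eq_append] at *
    rw [getLast_cons_concat, getLast_cons_concat] at hlast
    subst hlast
    have hcc := hc; have hcc' := hc'
    rw [chain_concat_iff] at hcc hcc'
    have hxbot : x ≠ ⊥ := by
      intro h
      have := chain_bot_lt hc x (by simp)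
      rw [h] at this; exact lt_irrefl _ this
    obtain ⟨w, _, hw⟩ := htree x hxbot
    have h1 := hw _ hcc.2
    have h2 := hw _ hcc'.2
    have hm : m = m' := by
      apply ih m m' _ hcc.1 hcc'.1 (by rw [h1, h2])
      have : m.length + 1 ≤ n + 1 := by simpa using hlen
      omega
    rw [hm]
end Helpers


section Helpers2
variable {S : Type*} [PartialOrder S] [OrderBot S]

lemma wordProb_append {S : Type*} (P : S → S → ℝ≥0∞) (e : S) (l : List S) (y : S) :
    wordProb P e (l ++ [y]) = wordProb P e l * P ((e :: l).getLast (List.cons_ne_nil _ _)) y := by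
  induction l generalizing e with
  | nil => simp [wordProb]
  | cons a l ih =>
    rw [List.cons_append, wordProb, wordProb, ih a, mul_assoc,
      List.getLast_cons (List.cons_ne_nil _ _)]

lemma chain_of_wordProb_ne_zero {P : S → S → ℝ≥0∞} (hP : IsUpwardRunKernel P) :
    ∀ {x : S} {l : List S}, ⊥ ∉ l → wordProb P x l ≠ 0 → List.Chain (· ⋖ ·) x l := by
  intro x l
  induction l generalizing x with
  | nil => intro _ _; exact List.Chain.nil
  | cons a l ih =>
    intro hmem h
    rw [wordProb] at h
    have h1 : P x a ≠ 0 := fun h0 => h (by simp [h0])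
    have h2 : wordProb P a l ≠ 0 := fun h0 => h (by simp [h0])
    have ha : x ⋖ a := by
      rcases (hP.2 x a).mp (pos_iff_ne_zero.mpr h1) with h | h
      · exact h
      · exact absurd h (by simp at hmem; tauto)
    exact List.Chain.cons ha (ih (by simp at hmem; tauto) h2)

lemma hitProb_eq_wordProb {P : S → S → ℝ≥0∞} (hP : IsUpwardRunKernel P)
    (htree : ∀ x : S, x ≠ ⊥ → ∃! w : S, w ⋖ x)
    {l : List S} (hl : List.Chain (· ⋖ ·) ⊥ l) :
    hitProb P ⊥ (((⊥:S) :: l).getLast (List.cons_ne_nil _ _)) = wordProb P ⊥ l := by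
  rcases List.eq_nil_or_concat l with rfl | ⟨m, x, rfl⟩
  · simp [hitProb, wordProb]
  simp only [List.concat_eq_append] at *
  rw [getLast_cons_concat]
  have hpw := chain_bot_pairwise hl
  have hxbot : x ≠ ⊥ := by
    intro h
    have := chain_bot_lt hl x (by simp)
    rw [h] at this; exact lt_irrefl _ this
  have hxm : x ∉ m := by
    intro hx
    have hpm : List.Pairwise (· < ·) (m ++ [x]) := (List.pairwise_cons.mp hpw).2
    have := (List.pairwise_append.mp hpm).2.2 x hx x (by simp)
    exact lt_irrefl _ this
  have hbm : ⊥ ∉ m := by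
    intro hb
    have := chain_bot_lt hl ⊥ (by simp [hb])
    exact lt_irrefl _ this
  rw [hitProb, if_neg hxbot]
  apply tsum_eq_single (⟨m, hxm, hbm⟩ : {l : List S // x ∉ l ∧ ⊥ ∉ l})
  rintro ⟨b, hxb, hbb⟩ hne
  by_contra h
  have hbmem : ⊥ ∉ b ++ [x] := by
    simp only [List.mem_append, List.mem_singleton]
    rintro (h1 | h1)
    · exact hbb h1
    · exact hxbot h1.symm
  have hchain : List.Chain (· ⋖ ·) ⊥ (b ++ [x]) :=
    chain_of_wordProb_ne_zero hP hbmem h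
  have := path_unique htree (b ++ [x]).length (b ++ [x]) (m ++ [x]) le_rfl hchain hl
    (by rw [getLast_cons_concat, getLast_cons_concat])
  have hb : b = m := by
    have := congrArg List.dropLast this
    simpa using this
  exact hne (Subtype.ext hb)

end Helpers2


section Main
variable {S : Type*} [PartialOrder S] [OrderBot S]

lemma survival_eq_level (P : S → S → ℝ≥0∞) (hP : IsUpwardRunKernel P)
    (htree : ∀ x : S, x ≠ ⊥ → ∃! w : S, w ⋖ x) (n : ℕ) :
    survival P ⊥ n = ∑' x : {x : S // InLevel x n}, hitProb P ⊥ x.1 := by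
  classical
  set g : {l : List S // List.Chain (· ⋖ ·) (⊥:S) l ∧ l.length = n} → {x : S // InLevel x n} :=
    fun l => ⟨((⊥:S) :: l.1).getLast (List.cons_ne_nil _ _), l.1, ⟨l.2.1, rfl⟩, l.2.2⟩ with hg_def
  have hg : Function.Bijective g := by
    constructor
    · rintro ⟨l, hl⟩ ⟨l', hl'⟩ h
      apply Subtype.ext
      exact path_unique htree l.length l l' le_rfl hl.1 hl'.1
        (congrArg Subtype.val h)
    · rintro ⟨x, l, ⟨hc, hlast⟩, hlen⟩
      exact ⟨⟨l, hc, hlen⟩, Subtype.ext hlast⟩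
  calc survival P ⊥ n
      = ∑' l : ↥{l : List S | l.length = n ∧ (⊥:S) ∉ l}, wordProb P ⊥ l.1 := rfl
    _ = ∑' l : List S, Set.indicator {l : List S | l.length = n ∧ (⊥:S) ∉ l} (wordProb P ⊥) l :=
        tsum_subtype _ _
    _ = ∑' l : List S, Set.indicator {l : List S | List.Chain (· ⋖ ·) (⊥:S) l ∧ l.length = n}
          (wordProb P ⊥) l := by
        apply tsum_congr
        intro l
        by_cases hA : l ∈ {l : List S | l.length = n ∧ (⊥:S) ∉ l} <;>
          by_cases hB : l ∈ {l : List S | List.Chain (· ⋖ ·) (⊥:S) l ∧ l.length = n}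
        · rw [Set.indicator_of_mem hA, Set.indicator_of_mem hB]
        · rw [Set.indicator_of_mem hA, Set.indicator_of_notMem hB]
          simp only [Set.mem_setOf_eq] at hA hB
          by_contra hne
          have hw : wordProb P ⊥ l ≠ 0 := fun h0 => hne (h0.trans rfl)
          exact hB ⟨chain_of_wordProb_ne_zero hP hA.2 hw, hA.1⟩
        · exfalso
          simp only [Set.mem_setOf_eq] at hA hB
          exact hA ⟨hB.2, fun hb => lt_irrefl _ (chain_bot_lt hB.1 ⊥ hb)⟩
        · rw [Set.indicator_of_notMem hA, Set.indicator_of_notMem hB]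
    _ = ∑' l : ↥{l : List S | List.Chain (· ⋖ ·) (⊥:S) l ∧ l.length = n}, wordProb P ⊥ l.1 :=
        (tsum_subtype _ _).symm
    _ = ∑' l : {l : List S // List.Chain (· ⋖ ·) (⊥:S) l ∧ l.length = n},
          hitProb P ⊥ (g l).1 :=
        tsum_congr fun l => (hitProb_eq_wordProb hP htree l.2.1).symm
    _ = ∑' x : {x : S // InLevel x n}, hitProb P ⊥ x.1 :=
        (Equiv.ofBijective g hg).tsum_eq (fun x => hitProb P ⊥ x.1)

lemma tsum_split {T : Type*} (F : T → ℝ≥0∞) (e : T) :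
    ∑' y, F y = F e + ∑' y : {y : T // y ≠ e}, F y.1 := by
  rw [ENNReal.tsum_eq_add_tsum_ite e]
  congr 1
  rw [show (∑' y : {y : T // y ≠ e}, F y.1)
      = ∑' y : ↥{y : T | y ≠ e}, F y.1 from rfl, tsum_subtype]
  apply tsum_congr
  intro y
  by_cases h : y = e <;> simp [Set.indicator, h]

lemma survival_zero (P : S → S → ℝ≥0∞) (e : S) : survival P e 0 = 1 := by
  have := tsum_eq_single (⟨[], by simp⟩ : {l : List S // l.length = 0 ∧ e ∉ l})
    (f := fun l => wordProb P e l.1) (L := SummationFilter.unconditional _) ?_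
  · rw [survival, this]; simp [wordProb]
  · rintro ⟨l, hl, _⟩ hne
    exact absurd (Subtype.ext (List.length_eq_zero_iff.mp hl)) hne

lemma survival_succ (P : S → S → ℝ≥0∞) (e : S) (h1 : ∀ x, ∑' y, P x y = 1) (n : ℕ) :
    survival P e n = returnAt P e n + survival P e (n + 1) := by
  classical
  have key : ∀ l : {l : List S // l.length = n ∧ e ∉ l},
      wordProb P e l.1 = wordProb P e (l.1 ++ [e])
        + ∑' y : {y : S // y ≠ e}, wordProb P e (l.1 ++ [y.1]) := by
    intro l
    have h2 : wordProb P e l.1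
        = wordProb P e l.1 * ∑' y, P ((e :: l.1).getLast (List.cons_ne_nil _ _)) y := by
      rw [h1, mul_one]
    rw [h2, tsum_split (fun y => P ((e :: l.1).getLast (List.cons_ne_nil _ _)) y) e,
      mul_add, ← ENNReal.tsum_mul_left, ← wordProb_append]
    congr 1
    apply tsum_congr
    intro y
    rw [← wordProb_append]
  have hsplit : survival P e n = returnAt P e n
      + ∑' l : {l : List S // l.length = n ∧ e ∉ l},
          ∑' y : {y : S // y ≠ e}, wordProb P e (l.1 ++ [y.1]) := by
    rw [survival, tsum_congr key, ENNReal.tsum_add, returnAt]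
  rw [hsplit]
  congr 1
  -- the double sum equals survival (n+1)
  set E : {l : List S // l.length = n ∧ e ∉ l} × {y : S // y ≠ e}
      → {m : List S // m.length = n + 1 ∧ e ∉ m} :=
    fun p => ⟨p.1.1 ++ [p.2.1], by simp [p.1.2.1], by
      simp only [List.mem_append, List.mem_singleton]
      rintro (h | h)
      · exact p.1.2.2 h
      · exact p.2.2 h.symm⟩ with hE_def
  have hE : Function.Bijective E := by
    constructor
    · rintro ⟨⟨l, hl⟩, ⟨y, hy⟩⟩ ⟨⟨l', hl'⟩, ⟨y', hy'⟩⟩ h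
      have h' : l ++ [y] = l' ++ [y'] := congrArg Subtype.val h
      have hll : l = l' := by
        have := congrArg List.dropLast h'
        simpa [List.dropLast_concat] using this
      have hyy : y = y' := by
        have := congrArg List.getLast? h'
        simpa [List.getLast?_concat] using this
      subst hll; subst hyy; rfl
    · rintro ⟨m, hlen, hmem⟩
      have hne : m ≠ [] := by
        intro h; rw [h] at hlen; simp at hlen
      refine ⟨⟨⟨m.dropLast, ?_, ?_⟩, ⟨m.getLast hne, ?_⟩⟩, Subtype.ext ?_⟩
      · simp [List.length_dropLast, hlen]
      · exact fun h => hmem ((List.dropLast_sublist m).mem h)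
      · exact fun h => hmem (h ▸ List.getLast_mem hne)
      · exact List.dropLast_append_getLast hne
  calc (∑' l : {l : List S // l.length = n ∧ e ∉ l},
          ∑' y : {y : S // y ≠ e}, wordProb P e (l.1 ++ [y.1]))
      = ∑' p : {l : List S // l.length = n ∧ e ∉ l} × {y : S // y ≠ e},
          wordProb P e ((E p).1) :=
        (ENNReal.tsum_prod (f := fun (l : {l : List S // l.length = n ∧ e ∉ l})
          (y : {y : S // y ≠ e}) => wordProb P e (l.1 ++ [y.1]))).symm
    _ = ∑' m : {m : List S // m.length = n + 1 ∧ e ∉ m}, wordProb P e m.1 :=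
        (Equiv.ofBijective E hE).tsum_eq (fun m => wordProb P e m.1)
    _ = survival P e (n + 1) := rfl

lemma survival_add_partial (P : S → S → ℝ≥0∞) (e : S) (h1 : ∀ x, ∑' y, P x y = 1) :
    ∀ n : ℕ, survival P e n + ∑ k ∈ Finset.range n, returnAt P e k = 1 := by
  intro n
  induction n with
  | zero => simp [survival_zero]
  | succ n ih =>
    rw [Finset.sum_range_succ, ← ih, survival_succ P e h1 n]
    ring

lemma recurrent_iff_tendsto (P : S → S → ℝ≥0∞) (e : S) (h1 : ∀ x, ∑' y, P x y = 1) :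
    Recurrent P e ↔ Filter.Tendsto (fun n => survival P e n) Filter.atTop (nhds 0) := by
  have hpart := survival_add_partial P e h1
  have hple : ∀ n, (∑ k ∈ Finset.range n, returnAt P e k) ≠ ⊤ := by
    intro n
    have : (∑ k ∈ Finset.range n, returnAt P e k) ≤ 1 := by
      rw [← hpart n]; exact le_add_self
    exact ne_top_of_le_ne_top ENNReal.one_ne_top this
  have hsle : ∀ n, survival P e n ≠ ⊤ := by
    intro n
    have : survival P e n ≤ 1 := by
      rw [← hpart n]; exact le_self_add
    exact ne_top_of_le_ne_top ENNReal.one_ne_top this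
  have hsurv_eq : ∀ n, survival P e n = 1 - ∑ k ∈ Finset.range n, returnAt P e k :=
    fun n => ENNReal.eq_sub_of_add_eq (hple n) (hpart n)
  have hpart_eq : ∀ n, (∑ k ∈ Finset.range n, returnAt P e k) = 1 - survival P e n :=
    fun n => ENNReal.eq_sub_of_add_eq (hsle n) ((add_comm _ _).trans (hpart n))
  have htend : Filter.Tendsto (fun n => ∑ k ∈ Finset.range n, returnAt P e k)
      Filter.atTop (nhds (∑' k, returnAt P e k)) := ENNReal.tendsto_nat_tsum _
  constructor
  · intro h
    rw [Recurrent] at h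
    rw [h] at htend
    have hsub : Filter.Tendsto (fun n => 1 - ∑ k ∈ Finset.range n, returnAt P e k)
        Filter.atTop (nhds (1 - 1)) :=
      ENNReal.Tendsto.sub tendsto_const_nhds htend (Or.inl ENNReal.one_ne_top)
    rw [tsub_self] at hsub
    exact (Filter.tendsto_congr fun n => (hsurv_eq n).symm).mp hsub
  · intro h
    have hsub : Filter.Tendsto (fun n => 1 - survival P e n) Filter.atTop (nhds (1 - 0)) :=
      ENNReal.Tendsto.sub tendsto_const_nhds h (Or.inl ENNReal.one_ne_top)
    rw [tsub_zero] at hsub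
    have := (Filter.tendsto_congr fun n => (hpart_eq n).symm).mp hsub
    exact tendsto_nhds_unique htend this

end Main

/-- on a rooted tree, `Pr_e(T_e > n) = ∑_{x ∈ S_n} F(x)`, and the chain is
recurrent iff this quantity tends to `0`. -/
theorem tree_survival_eq_level_sum {S : Type*} [PartialOrder S] [OrderBot S]
    [Countable S] (hfin : BoundedChainsFinite S)
    (htree : ∀ x : S, x ≠ ⊥ → ∃! w : S, w ⋖ x)
    (P : S → S → ℝ≥0∞) (hP : IsUpwardRunKernel P) :
    (∀ n : ℕ, survival P ⊥ n = ∑' x : {x : S // InLevel x n}, hitProb P ⊥ x.1) ∧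
    (Recurrent P (⊥ : S) ↔
      Filter.Tendsto (fun n : ℕ => ∑' x : {x : S // InLevel x n}, hitProb P ⊥ x.1)
        Filter.atTop (nhds 0)) := by
  have part1 : ∀ n : ℕ, survival P ⊥ n = ∑' x : {x : S // InLevel x n}, hitProb P ⊥ x.1 :=
    fun n => survival_eq_level P hP htree n
  refine ⟨part1, ?_⟩
  rw [recurrent_iff_tendsto P ⊥ hP.1]
  exact Filter.tendsto_congr part1

end
end

section
/- Let X be an upward run chain on a poset S, and let F̂ be the standard invariant function of the associated upward run chain on the path space Ŝ. Then for every x ∈ S, F(x) = Σ_{a ∈ Ŝ(x)} F̂(a), where Ŝ(x) is the set of paths from e ending at x, and F is the standard invariant function on S. -/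
open scoped ENNReal

noncomputable section
open scoped Classical

variable {S : Type*} [PartialOrder S] [OrderBot S]

/-- The path space of a poset: finite covering paths starting at `⊥`;
the element `⟨l, _⟩` represents the path `⊥ :: l`. -/
def PathSpace (S : Type*) [PartialOrder S] [OrderBot S] : Type _ :=
  {l : List S // List.Chain (· ⋖ ·) ⊥ l}

namespace PathSpace

variable {S : Type*} [PartialOrder S] [OrderBot S]

/-- The prefix partial order on path space. -/
instance : PartialOrder (PathSpace S) where
  le a b := a.1 <+: b.1
  le_refl a := List.prefix_refl _
  le_trans a b c hab hbc := List.IsPrefix.trans hab hbc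
  le_antisymm a b hab hba := Subtype.ext (hab.eq_of_length_le hba.length_le)

/-- The degenerate path `⊥` is the root of path space. -/
instance : OrderBot (PathSpace S) where
  bot := ⟨[], List.Chain.nil⟩
  bot_le a := (List.nil_prefix : [] <+: a.1)

/-- The endpoint `m(a)` of a path `a`. -/
def endpt (a : PathSpace S) : S :=
  (⊥ :: a.1).getLast (List.cons_ne_nil _ _)

end PathSpace



private lemma wordProb_pos_chain {S : Type*} (P : S → S → ℝ≥0∞) :
    ∀ (l : List S) (y : S), wordProb P y l ≠ 0 → List.Chain (fun a b => 0 < P a b) y l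
  | [], _, _ => List.Chain.nil
  | z :: l, y, h => by
    rw [wordProb] at h
    rcases mul_ne_zero_iff.mp h with ⟨h1, h2⟩
    exact List.Chain.cons (pos_iff_ne_zero.mpr h1) (wordProb_pos_chain P l z h2)

private lemma chain_cov_of_pos {S : Type*} [PartialOrder S] [OrderBot S]
    (P : S → S → ℝ≥0∞) (hP : IsUpwardRunKernel P) :
    ∀ (l : List S) (y : S), List.Chain (fun a b => 0 < P a b) y l →
      (∀ z ∈ l, z ≠ ⊥) → List.Chain (· ⋖ ·) y l
  | [], _, _, _ => List.Chain.nil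
  | z :: l, y, h, hb => by
    rcases List.chain_cons.mp h with ⟨h1, h2⟩
    refine List.Chain.cons ?_
      (chain_cov_of_pos P hP l z h2 fun w hw => hb w (List.mem_cons_of_mem _ hw))
    rcases (hP.2 y z).mp h1 with h | h
    · exact h
    · exact absurd h (hb z List.mem_cons_self)

private lemma path_pairwise {S : Type*} [PartialOrder S] [OrderBot S]
    {l : List S} (h : List.Chain (· ⋖ ·) ⊥ l) : List.Pairwise (· < ·) (⊥ :: l) :=
  List.isChain_iff_pairwise.mp (List.IsChain.imp (fun _ _ hc => hc.lt) h)

private lemma path_decomp {S : Type*} [PartialOrder S] [OrderBot S]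
    {l : List S} (hl : List.Chain (· ⋖ ·) ⊥ l) {x : S} (hx : x ≠ ⊥)
    (he : (⊥ :: l).getLast (List.cons_ne_nil _ _) = x) :
    l = l.dropLast ++ [x] ∧ x ∉ l.dropLast ∧ ⊥ ∉ l.dropLast := by
  have hne : l ≠ [] := by
    rintro rfl
    exact hx (by simpa using he.symm)
  have hlast : l.getLast hne = x := by
    rw [← List.getLast_cons hne (a := (⊥ : S))]
    exact he
  have hdec : l = l.dropLast ++ [x] := by
    conv_lhs => rw [← List.dropLast_concat_getLast hne]
    rw [hlast]
  have hpl : List.Pairwise (· < ·) l := (path_pairwise hl).of_cons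
  have hxd : x ∉ l.dropLast := by
    intro hmem
    have := (List.pairwise_append.mp (hdec ▸ hpl)).2.2 x hmem x (List.mem_singleton_self x)
    exact lt_irrefl _ this
  have hbot : ⊥ ∉ l.dropLast := by
    intro hmem
    have hml : (⊥ : S) ∈ l := (List.dropLast_sublist l).mem hmem
    exact lt_irrefl _ ((List.pairwise_cons.mp (path_pairwise hl)).1 ⊥ hml)
  exact ⟨hdec, hxd, hbot⟩

/-- `F(x) = ∑_{a ∈ Ŝ(x)} F̂(a)`: the standard invariant function on `S`
is the sum, over the covering paths `a` from `⊥` ending at `x`, of the products `F̂(a)`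
of the transition probabilities along the path. -/
theorem F_eq_sum_over_paths {S : Type*} [PartialOrder S] [OrderBot S]
    [Countable S] (P : S → S → ℝ≥0∞) (hP : IsUpwardRunKernel P) :
    ∀ x : S, hitProb P ⊥ x =
      ∑' a : {a : PathSpace S // PathSpace.endpt a = x}, wordProb P ⊥ a.1.1 := by
  intro x
  by_cases hx : x = ⊥
  · subst hx
    rw [hitProb, if_pos rfl]
    have key : ∀ a : {a : PathSpace S // PathSpace.endpt a = ⊥}, a.1.1 = [] := by
      rintro ⟨⟨l, hl⟩, he⟩
      by_contra hne
      have hmem : PathSpace.endpt ⟨l, hl⟩ ∈ l := by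
        unfold PathSpace.endpt
        rw [List.getLast_cons hne]
        exact List.getLast_mem hne
      rw [he] at hmem
      exact lt_irrefl _ ((List.pairwise_cons.mp (path_pairwise hl)).1 ⊥ hmem)
    have h1 : (∑' a : {a : PathSpace S // PathSpace.endpt a = ⊥}, wordProb P ⊥ a.1.1) =
        wordProb P ⊥ ([] : List S) := by
      have hbot : PathSpace.endpt (⟨[], List.Chain.nil⟩ : PathSpace S) = ⊥ := rfl
      refine tsum_eq_single (⟨⟨[], List.Chain.nil⟩, hbot⟩ :
        {a : PathSpace S // PathSpace.endpt a = ⊥}) ?_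
      intro b hb
      exact absurd (Subtype.ext (Subtype.ext (key b))) hb
    rw [h1]
    rfl
  · rw [hitProb, if_neg hx]
    refine tsum_eq_tsum_of_ne_zero_bij
      (f := fun l : {l : List S // x ∉ l ∧ ⊥ ∉ l} => wordProb P ⊥ (l.1 ++ [x]))
      (g := fun a : {a : PathSpace S // PathSpace.endpt a = x} => wordProb P ⊥ a.1.1)
      (fun a => (⟨a.1.1.1.dropLast,
        (path_decomp a.1.1.2 hx a.1.2).2.1,
        (path_decomp a.1.1.2 hx a.1.2).2.2⟩ : {l : List S // x ∉ l ∧ ⊥ ∉ l})) ?_ ?_ ?_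
    · rintro a b hab
      have hd : a.1.1.1.dropLast = b.1.1.1.dropLast := congrArg Subtype.val hab
      have : a.1.1.1 = b.1.1.1 := by
        rw [(path_decomp a.1.1.2 hx a.1.2).1, (path_decomp b.1.1.2 hx b.1.2).1, hd]
      exact Subtype.ext (Subtype.ext (Subtype.ext this))
    · rintro ⟨l, hxl, hbl⟩ hf
      simp only [Function.mem_support] at hf
      have hchain := wordProb_pos_chain P (l ++ [x]) ⊥ hf
      have hcov : List.Chain (· ⋖ ·) ⊥ (l ++ [x]) := by
        refine chain_cov_of_pos P hP _ _ hchain ?_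
        intro z hz
        rcases List.mem_append.mp hz with hz | hz
        · rintro rfl; exact hbl hz
        · rw [List.mem_singleton.mp hz]; exact hx
      have hend : PathSpace.endpt (⟨l ++ [x], hcov⟩ : PathSpace S) = x := by
        unfold PathSpace.endpt
        rw [List.getLast_cons (by simp : l ++ [x] ≠ [])]
        exact List.getLast_concat
      refine ⟨⟨⟨⟨l ++ [x], hcov⟩, hend⟩, hf⟩, ?_⟩
      exact Subtype.ext (List.dropLast_concat (l₁ := l) (b := x))
    · intro a
      show wordProb P ⊥ (a.1.1.1.dropLast ++ [x]) = wordProb P ⊥ a.1.1.1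
      rw [← (path_decomp a.1.1.2 hx a.1.2).1]


end
end
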